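/- For every natural number ℓ ≥ 0, the sunlet graph S_n with n = 9 + 4ℓ satisfies r^+_χ(S_n) = n; that is, χ(S_n) = 3 and the maximum, over all proper 3-colourings c of S_n, of the number of vertices yielding a rainbow neighbourhood with respect to c equals n (exactly the n cycle vertices can be made to yield, and no pendant vertex can yield). -/

import Mathlib

open SimpleGraph

/-- A vertex `v` yields a rainbow neighbourhood w.r.t. the colouring `c` if its closed
neighbourhood `N[v]` contains a vertex of every colour class. -/
def yieldsRainbow {V : Type*} {k : ℕ} (G : SimpleGraph V) (c : G.Coloring (Fin k)) (v : V) :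
    Prop :=
  ∀ i : Fin k, ∃ u : V, (u = v ∨ G.Adj v u) ∧ c u = i

/-- The number of vertices yielding a rainbow neighbourhood w.r.t. `c`. -/
noncomputable def rainbowCount {V : Type*} [Fintype V] {k : ℕ} (G : SimpleGraph V)
    (c : G.Coloring (Fin k)) : ℕ :=
  Nat.card {v : V // yieldsRainbow G c v}

/-- The minimum number of vertices yielding a rainbow neighbourhood, over all proper
colourings with exactly `k` colours. -/
noncomputable def rMin {V : Type*} [Fintype V] (G : SimpleGraph V) (k : ℕ) : ℕ :=
  sInf (Set.range fun c : G.Coloring (Fin k) => rainbowCount G c)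

/-- The maximum number of vertices yielding a rainbow neighbourhood, over all proper
colourings with exactly `k` colours. -/
noncomputable def rMax {V : Type*} [Fintype V] (G : SimpleGraph V) (k : ℕ) : ℕ :=
  sSup (Set.range fun c : G.Coloring (Fin k) => rainbowCount G c)


/-- The sunlet graph `S_n` on `2n` vertices: `Sum.inl i` are the cycle vertices
(adjacent as in `C_n`), and `Sum.inr i` is the pendant vertex attached to `Sum.inl i`. -/
def sunletGraph (n : ℕ) : SimpleGraph (Fin n ⊕ Fin n) where
  Adj x y :=
    match x, y with
    | Sum.inl i, Sum.inl j => (SimpleGraph.cycleGraph n).Adj i j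
    | Sum.inl i, Sum.inr j => i = j
    | Sum.inr i, Sum.inl j => i = j
    | Sum.inr _, Sum.inr _ => False
  symm := by
    constructor
    rintro (i | i) (j | j) h <;> simp_all
    all_goals exact (SimpleGraph.cycleGraph n).adj_symm h
  loopless := by
    constructor
    rintro (i | i) h <;> simp_all

/-!
A pendant vertex has a closed neighbourhood of only two vertices, so it never sees all three
colours. Conversely, take any proper 3-colouring of the cycle and give the pendant vertex at
`v_j` the colour missing from `v_{j-1}, v_j`: then every cycle vertex `v_j` sees the colours of
`v_{j-1}`, `v_j` and its pendant vertex, i.e. all three. For odd `n` the cycle itself already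
needs three colours, so `χ(S_n) = 3`.
-/

@[simp] lemma sunletGraph_adj_inr_inl {n : ℕ} {i j : Fin n} :
    (sunletGraph n).Adj (.inr i) (.inl j) ↔ i = j := Iff.rfl

@[simp] lemma sunletGraph_adj_inr_inr {n : ℕ} {i j : Fin n} :
    ¬ (sunletGraph n).Adj (.inr i) (.inr j) := id

lemma sunletGraph_neighborSet_inr {n : ℕ} (j : Fin n) :
    (sunletGraph n).neighborSet (.inr j) = {.inl j} := by
  ext (i | i) <;> simp [eq_comm]

def cycleGraphHomSunletGraph (n : ℕ) : cycleGraph n →g sunletGraph n :=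
  ⟨Sum.inl, id⟩

lemma cycleGraph_adj_sub_one {n : ℕ} [NeZero n] (hn : 2 ≤ n) (i : Fin n) :
    (cycleGraph n).Adj (i - 1) i := by
  rw [cycleGraph_adj', sub_sub_cancel, Fin.val_one', Nat.mod_eq_of_lt hn]
  exact Or.inr rfl

lemma rainbowCount_eq_ncard {V : Type*} [Fintype V] {k : ℕ} (G : SimpleGraph V)
    (c : G.Coloring (Fin k)) : rainbowCount G c = {v | yieldsRainbow G c v}.ncard := rfl

lemma le_ncard_of_yieldsRainbow {V : Type*} [Finite V] {k : ℕ} {G : SimpleGraph V}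
    {c : G.Coloring (Fin k)} {v : V} (h : yieldsRainbow G c v) :
    k ≤ (insert v (G.neighborSet v)).ncard := by
  have himage : c '' insert v (G.neighborSet v) = Set.univ := by
    refine Set.eq_univ_of_forall fun i => ?_
    obtain ⟨u, hu, rfl⟩ := h i
    exact ⟨u, hu, rfl⟩
  calc k = (Set.univ : Set (Fin k)).ncard := by simp
    _ = (c '' insert v (G.neighborSet v)).ncard := by rw [himage]
    _ ≤ (insert v (G.neighborSet v)).ncard := Set.ncard_image_le (Set.toFinite _)

lemma not_yieldsRainbow_sunletGraph_inr {n k : ℕ} (hk : 3 ≤ k)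
    (c : (sunletGraph n).Coloring (Fin k)) (j : Fin n) :
    ¬ yieldsRainbow (sunletGraph n) c (.inr j) := by
  intro h
  have := le_ncard_of_yieldsRainbow h
  rw [sunletGraph_neighborSet_inr, Set.ncard_pair (by simp)] at this
  omega

lemma setOf_yieldsRainbow_sunletGraph_subset {n k : ℕ} (hk : 3 ≤ k)
    (c : (sunletGraph n).Coloring (Fin k)) :
    {v | yieldsRainbow (sunletGraph n) c v} ⊆ Set.range Sum.inl := by
  rintro (i | j) h
  · exact ⟨i, rfl⟩
  · exact absurd h (not_yieldsRainbow_sunletGraph_inr hk c j)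

lemma ncard_range_sumInl (n : ℕ) :
    (Set.range (Sum.inl : Fin n → Fin n ⊕ Fin n)).ncard = n := by
  rw [Set.ncard_range_of_injective Sum.inl_injective, Nat.card_fin]

lemma rainbowCount_sunletGraph_le {n k : ℕ} (hk : 3 ≤ k)
    (c : (sunletGraph n).Coloring (Fin k)) : rainbowCount (sunletGraph n) c ≤ n := by
  calc rainbowCount (sunletGraph n) c = {v | yieldsRainbow (sunletGraph n) c v}.ncard :=
        rainbowCount_eq_ncard _ c
    _ ≤ (Set.range Sum.inl).ncard :=
        Set.ncard_le_ncard (setOf_yieldsRainbow_sunletGraph_subset hk c)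
    _ = n := ncard_range_sumInl n

lemma rMax_eq_of_rainbowCount_eq_of_forall_le {V : Type*} [Fintype V] {G : SimpleGraph V} {k m : ℕ}
    (c : G.Coloring (Fin k)) (hc : rainbowCount G c = m)
    (hle : ∀ c' : G.Coloring (Fin k), rainbowCount G c' ≤ m) : rMax G k = m :=
  IsGreatest.csSup_eq ⟨⟨c, hc⟩, by rintro _ ⟨c', rfl⟩; exact hle c'⟩

lemma fin_three_neg_add_ne_right : ∀ a b : Fin 3, a ≠ b → -(a + b) ≠ b := by decide

lemma fin_three_eq_or_eq_or_eq_neg_add :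
    ∀ a b : Fin 3, a ≠ b → ∀ x, x = a ∨ x = b ∨ x = -(a + b) := by decide

-- For distinct colours `a b : Fin 3`, `-(a + b)` is the third one, since `0 + 1 + 2 = 0`.
def sunletColoringOfCycle {n : ℕ} [NeZero n] (hn : 2 ≤ n)
    (f : (cycleGraph n).Coloring (Fin 3)) : (sunletGraph n).Coloring (Fin 3) :=
  Coloring.mk (Sum.elim f fun j => -(f (j - 1) + f j)) <| by
    have hpendant (j : Fin n) : -(f (j - 1) + f j) ≠ f j :=
      fin_three_neg_add_ne_right _ _ (f.valid (cycleGraph_adj_sub_one hn j))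
    rintro (i | i) (j | j) h
    · exact f.valid h
    · obtain rfl : i = j := h
      exact (hpendant i).symm
    · obtain rfl : i = j := h
      exact hpendant i
    · exact absurd h sunletGraph_adj_inr_inr

lemma yieldsRainbow_sunletColoringOfCycle_inl {n : ℕ} [NeZero n] (hn : 2 ≤ n)
    (f : (cycleGraph n).Coloring (Fin 3)) (i : Fin n) :
    yieldsRainbow (sunletGraph n) (sunletColoringOfCycle hn f) (.inl i) := by
  intro x
  rcases fin_three_eq_or_eq_or_eq_neg_add _ _ (f.valid (cycleGraph_adj_sub_one hn i)) x
    with rfl | rfl | rfl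
  · exact ⟨.inl (i - 1), .inr (cycleGraph_adj_sub_one hn i).symm, rfl⟩
  · exact ⟨.inl i, .inl rfl, rfl⟩
  · exact ⟨.inr i, .inr rfl, rfl⟩

lemma rainbowCount_sunletColoringOfCycle {n : ℕ} [NeZero n] (hn : 2 ≤ n)
    (f : (cycleGraph n).Coloring (Fin 3)) :
    rainbowCount (sunletGraph n) (sunletColoringOfCycle hn f) = n := by
  have hset : {v | yieldsRainbow (sunletGraph n) (sunletColoringOfCycle hn f) v} =
      Set.range Sum.inl := by
    refine (setOf_yieldsRainbow_sunletGraph_subset le_rfl _).antisymm ?_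
    rintro _ ⟨i, rfl⟩
    exact yieldsRainbow_sunletColoringOfCycle_inl hn f i
  rw [rainbowCount_eq_ncard, hset, ncard_range_sumInl]

lemma chromaticNumber_sunletGraph_of_odd {n : ℕ} (hn : 2 ≤ n) (hodd : Odd n) :
    (sunletGraph n).chromaticNumber = 3 := by
  have : NeZero n := ⟨by omega⟩
  refine le_antisymm ?_ ?_
  · exact (sunletColoringOfCycle hn (cycleGraph.tricoloring n hn)).colorable.chromaticNumber_le
  · rw [← chromaticNumber_cycleGraph_of_odd n hn hodd]
    exact chromaticNumber_mono_of_hom (cycleGraphHomSunletGraph n)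

/-- For `n = 9 + 4ℓ`, the sunlet graph `S_n` has `χ = 3` and
`r⁺_χ(S_n) = n`: some proper 3-colouring makes all `n` cycle vertices yield rainbow
neighbourhoods, while no pendant vertex ever yields one. -/
theorem rMax_sunlet_nine_plus (ℓ : ℕ) :
    (sunletGraph (9 + 4 * ℓ)).chromaticNumber = 3 ∧
      rMax (sunletGraph (9 + 4 * ℓ)) 3 = 9 + 4 * ℓ ∧
      (∃ c : (sunletGraph (9 + 4 * ℓ)).Coloring (Fin 3),
        ∀ i : Fin (9 + 4 * ℓ), yieldsRainbow (sunletGraph (9 + 4 * ℓ)) c (Sum.inl i)) ∧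
      (∀ c : (sunletGraph (9 + 4 * ℓ)).Coloring (Fin 3),
        ∀ j : Fin (9 + 4 * ℓ), ¬ yieldsRainbow (sunletGraph (9 + 4 * ℓ)) c (Sum.inr j)) := by
  have hn : 2 ≤ 9 + 4 * ℓ := by omega
  have : NeZero (9 + 4 * ℓ) := ⟨by omega⟩
  have hodd : Odd (9 + 4 * ℓ) := ⟨4 + 2 * ℓ, by ring⟩
  let c := sunletColoringOfCycle hn (cycleGraph.tricoloring _ hn)
  exact ⟨chromaticNumber_sunletGraph_of_odd hn hodd,
    rMax_eq_of_rainbowCount_eq_of_forall_le c (rainbowCount_sunletColoringOfCycle hn _)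
      (rainbowCount_sunletGraph_le le_rfl),
    ⟨c, yieldsRainbow_sunletColoringOfCycle_inl hn _⟩,
    not_yieldsRainbow_sunletGraph_inr le_rfl⟩
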